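/- Let Ω > 0, λ > 0 and let T satisfy 0 < T ≤ π/Ω. If ψ ∈ PW_Ω satisfies ψ(mT) ∈ 2λℤ for every m ∈ ℤ, then the set {m ∈ ℤ : ψ(mT) ≠ 0} is finite. -/

import Mathlib

/-!
By the Riemann–Lebesgue lemma every `ψ ∈ PW_Ω`, being the Fourier transform of a function
supported on `[-Ω, Ω]`, tends to `0` at infinity, so its samples `ψ(mT)` tend to `0` as `|m| → ∞`.
A nonzero element of `2λℤ` has absolute value at least `2λ`, so only finitely many samples are nonzero.
-/

open MeasureTheory Real

/-- Membership in the Paley–Wiener space `PW_Ω`: `g(t) = ∫_{−Ω}^{Ω} φ(ω) e^{iωt} dω`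
for some square-integrable `φ : [−Ω,Ω] → ℂ`. -/
def IsPW (Ω : ℝ) (g : ℝ → ℝ) : Prop :=
  ∃ φ : ℝ → ℂ, MemLp φ 2 (volume.restrict (Set.Icc (-Ω) Ω)) ∧
    ∀ t : ℝ, (g t : ℂ) =
      ∫ ω in Set.Icc (-Ω) Ω, φ ω * Complex.exp (Complex.I * (ω : ℂ) * (t : ℂ))

open Filter Topology

-- No integrability of `φ` is needed: otherwise every integral is `0` by convention.
theorem tendsto_setIntegral_mul_exp_cocompact {s : Set ℝ} (hs : MeasurableSet s) (φ : ℝ → ℂ) :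
    Tendsto (fun t : ℝ => ∫ ω in s, φ ω * Complex.exp (Complex.I * ω * t))
      (cocompact ℝ) (𝓝 0) := by
  have hscale : Tendsto (fun t : ℝ => -(2 * π)⁻¹ * t) (cocompact ℝ) (cocompact ℝ) :=
    (Homeomorph.mulLeft₀ _ (by simp [pi_ne_zero])).map_cocompact.le
  refine ((Real.zero_at_infty_fourier (s.indicator φ)).comp hscale).congr fun t => ?_
  rw [Function.comp_apply, fourier_real_eq_integral_exp_smul, ← integral_indicator hs]
  congr 1 with ω
  by_cases hω : ω ∈ s
  · rw [Set.indicator_of_mem hω, Set.indicator_of_mem hω, smul_eq_mul, mul_comm]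
    congr 2
    field_simp
    push_cast
    ring
  · simp [Set.indicator_of_notMem hω]

theorem IsPW.tendsto_cocompact {Ω : ℝ} {ψ : ℝ → ℝ} (hψ : IsPW Ω ψ) :
    Tendsto ψ (cocompact ℝ) (𝓝 0) := by
  obtain ⟨φ, -, hrep⟩ := hψ
  rw [← tendsto_ofReal_iff, Complex.ofReal_zero, funext hrep]
  exact tendsto_setIntegral_mul_exp_cocompact measurableSet_Icc φ

theorem IsPW.tendsto_samples_cofinite {Ω T : ℝ} {ψ : ℝ → ℝ} (hψ : IsPW Ω ψ) (hT : T ≠ 0) :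
    Tendsto (fun m : ℤ => ψ (m * T)) cofinite (𝓝 0) := by
  refine hψ.tendsto_cocompact.comp ((Int.tendsto_zmultiplesHom_cofinite hT).congr fun m => ?_)
  simp

theorem Filter.Tendsto.finite_support_of_le_norm {α E : Type*} [SeminormedAddGroup E]
    {f : α → E} {c : ℝ} (hf : Tendsto f cofinite (𝓝 0)) (hc : 0 < c)
    (hgap : ∀ a, f a ≠ 0 → c ≤ ‖f a‖) : (Function.support f).Finite := by
  refine (eventually_cofinite.1 (hf.norm.eventually (gt_mem_nhds (by simpa using hc)))).subset ?_
  exact fun a ha => (hgap a ha).not_gt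

theorem le_abs_of_eq_mul_intCast {c x : ℝ} {k : ℤ} (hc : 0 ≤ c) (hx : x = c * k) (hx0 : x ≠ 0) :
    c ≤ |x| := by
  have hk : k ≠ 0 := by rintro rfl; simp_all
  rw [hx, abs_mul, abs_of_nonneg hc, ← Int.cast_abs]
  exact le_mul_of_one_le_right hc (by exact_mod_cast Int.one_le_abs hk)

theorem stmt10_general (Ω lam T : ℝ) (hlam : 0 < lam)
    (hT0 : 0 < T)
    (ψ : ℝ → ℝ) (hψ : IsPW Ω ψ)
    (hsamples : ∀ m : ℤ, ∃ k : ℤ, ψ (m * T) = 2 * lam * k) :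
    {m : ℤ | ψ (m * T) ≠ 0}.Finite := by
  refine (hψ.tendsto_samples_cofinite hT0.ne').finite_support_of_le_norm
    (by positivity : 0 < 2 * lam) fun m hm => ?_
  obtain ⟨k, hk⟩ := hsamples m
  exact le_abs_of_eq_mul_intCast (by positivity) hk hm

theorem stmt10 (Ω lam T : ℝ) (hΩ : 0 < Ω) (hlam : 0 < lam)
    (hT0 : 0 < T) (hT : T ≤ π / Ω)
    (ψ : ℝ → ℝ) (hψ : IsPW Ω ψ)
    (hsamples : ∀ m : ℤ, ∃ k : ℤ, ψ (m * T) = 2 * lam * k) :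
    {m : ℤ | ψ (m * T) ≠ 0}.Finite :=
  stmt10_general Ω lam T hlam hT0 ψ hψ hsamples
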